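/- arXiv:1010.3456 — 3 statements merged into one kernel-verified Lean document; each statement's English description precedes it below -/
import Mathlib

section
/- With the coupled boundary condition at z = z₁, the following energy identity holds: ‖∂̄η₊‖² + ‖∂̄η₋‖² = (1/4)‖dη₊‖² + (1/4)‖dη₋‖², where ∂̄ = (1/2)(∂_x + i∂_z), all norms are L² norms over the respective domains, and dη denotes the full gradient. -/
open MeasureTheory

/-- Partial derivative in the `x`-direction. -/
noncomputable def Dx (f : ℝ × ℝ → ℂ) (p : ℝ × ℝ) : ℂ := fderiv ℝ f p (1, 0)

/-- Partial derivative in the `z`-direction. -/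
noncomputable def Dz (f : ℝ × ℝ → ℂ) (p : ℝ × ℝ) : ℂ := fderiv ℝ f p (0, 1)

/-- The operator `∂̄ = (1/2)(∂_x + i ∂_z)`. -/
noncomputable def dbar (f : ℝ × ℝ → ℂ) (p : ℝ × ℝ) : ℂ :=
  (1 / 2) * (Dx f p + Complex.I * Dz f p)

/-!
Pointwise, `4 |∂̄η|² = |dη|² + 2 (ζ_x φ_z - φ_x ζ_z)`, and the Jacobian term is the divergence
`∂_x (ζ φ_z) - ∂_z (ζ φ_x)`. Over a strip `ℝ × [a, b]` it therefore integrates to the boundary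
terms `∫ ζ φ_x dx` at `z = a` minus those at `z = b`. As `φ_x = 0` on a line `φ = 0`, the outer
boundaries contribute nothing, and at the interface the coupling gives
`ζ₋ ∂_x φ₋ = ζ₋ τ ∂_x φ₊ = ζ₊ ∂_x φ₊`, so the two strips' interface terms cancel.
-/

open MeasureTheory Set Complex
open scoped ContDiff

noncomputable def partialX (u : ℝ × ℝ → ℝ) (p : ℝ × ℝ) : ℝ := fderiv ℝ u p (1, 0)

noncomputable def partialZ (u : ℝ × ℝ → ℝ) (p : ℝ × ℝ) : ℝ := fderiv ℝ u p (0, 1)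

section PartialDerivatives

variable {u v : ℝ × ℝ → ℝ}

theorem contDiff_partialX {n : WithTop ℕ∞} (hu : ContDiff ℝ (n + 1) u) :
    ContDiff ℝ n (partialX u) :=
  (hu.fderiv_right le_rfl).clm_apply contDiff_const

theorem contDiff_partialZ {n : WithTop ℕ∞} (hu : ContDiff ℝ (n + 1) u) :
    ContDiff ℝ n (partialZ u) :=
  (hu.fderiv_right le_rfl).clm_apply contDiff_const

theorem continuous_partialX (hu : ContDiff ℝ 1 u) : Continuous (partialX u) :=
  (hu.continuous_fderiv one_ne_zero).clm_apply continuous_const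

theorem continuous_partialZ (hu : ContDiff ℝ 1 u) : Continuous (partialZ u) :=
  (hu.continuous_fderiv one_ne_zero).clm_apply continuous_const

theorem hasCompactSupport_partialX (hu : HasCompactSupport u) : HasCompactSupport (partialX u) :=
  hu.fderiv_apply ℝ (1, 0)

theorem hasCompactSupport_partialZ (hu : HasCompactSupport u) : HasCompactSupport (partialZ u) :=
  hu.fderiv_apply ℝ (0, 1)

theorem hasDerivAt_partialX {x z : ℝ} (hu : DifferentiableAt ℝ u (x, z)) :
    HasDerivAt (fun x => u (x, z)) (partialX u (x, z)) x :=
  hu.hasFDerivAt.comp_hasDerivAt x ((hasDerivAt_id x).prodMk (hasDerivAt_const x z))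

theorem hasDerivAt_partialZ {x z : ℝ} (hu : DifferentiableAt ℝ u (x, z)) :
    HasDerivAt (fun z => u (x, z)) (partialZ u (x, z)) z :=
  hu.hasFDerivAt.comp_hasDerivAt z ((hasDerivAt_const z x).prodMk (hasDerivAt_id z))

theorem partialX_eq_deriv {x z : ℝ} (hu : DifferentiableAt ℝ u (x, z)) :
    partialX u (x, z) = deriv (fun x => u (x, z)) x :=
  (hasDerivAt_partialX hu).deriv.symm

theorem partialX_mul {p : ℝ × ℝ} (hu : DifferentiableAt ℝ u p) (hv : DifferentiableAt ℝ v p) :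
    partialX (u * v) p = u p * partialX v p + v p * partialX u p := by
  simp [partialX, fderiv_mul hu hv]

theorem partialZ_mul {p : ℝ × ℝ} (hu : DifferentiableAt ℝ u p) (hv : DifferentiableAt ℝ v p) :
    partialZ (u * v) p = u p * partialZ v p + v p * partialZ u p := by
  simp [partialZ, fderiv_mul hu hv]

theorem partialX_partialZ_comm (hu : ContDiff ℝ 2 u) (p : ℝ × ℝ) :
    partialX (partialZ u) p = partialZ (partialX u) p := by
  have hfd : Differentiable ℝ (fderiv ℝ u) := (hu.fderiv_right le_rfl).differentiable one_ne_zero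
  have hsymm := hu.contDiffAt.isSymmSndFDerivAt (x := p) (by simp) (1, 0) (0, 1)
  show fderiv ℝ (fun q => fderiv ℝ u q (0, 1)) p (1, 0) =
    fderiv ℝ (fun q => fderiv ℝ u q (1, 0)) p (0, 1)
  rw [fderiv_clm_apply (hfd p) (differentiableAt_const _),
    fderiv_clm_apply (hfd p) (differentiableAt_const _)]
  simpa using hsymm

theorem jacobian_eq_partialX_sub_partialZ {φ ζ : ℝ × ℝ → ℝ} (hφ : ContDiff ℝ 2 φ)
    (hζ : Differentiable ℝ ζ) (p : ℝ × ℝ) :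
    partialX ζ p * partialZ φ p - partialX φ p * partialZ ζ p =
      partialX (ζ * partialZ φ) p - partialZ (ζ * partialX φ) p := by
  have hφ1 : ContDiff ℝ (1 + 1) φ := hφ
  rw [partialX_mul (hζ p) ((contDiff_partialZ hφ1).differentiable one_ne_zero p),
    partialZ_mul (hζ p) ((contDiff_partialX hφ1).differentiable one_ne_zero p),
    partialX_partialZ_comm hφ]
  ring

end PartialDerivatives

section Strip

theorem integrable_comp_prodMk_left {E : Type*} [NormedAddCommGroup E] {u : ℝ × ℝ → E}
    (hu : Continuous u) (hs : HasCompactSupport u) (z : ℝ) :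
    Integrable (fun x => u (x, z)) := by
  refine (hu.comp (by fun_prop)).integrable_of_hasCompactSupport ?_
  refine IsCompact.closure_of_subset (hs.image continuous_fst) fun x hx => ?_
  exact ⟨(x, z), subset_closure hx, rfl⟩

theorem volume_restrict_univ_prod (s : Set ℝ) :
    (volume : Measure (ℝ × ℝ)).restrict (univ ×ˢ s) = volume.prod (volume.restrict s) := by
  rw [Measure.volume_eq_prod, ← Measure.prod_restrict, Measure.restrict_univ]

variable {u : ℝ × ℝ → ℝ}

theorem integral_univ_prod_partialX (hu : ContDiff ℝ 1 u) (hs : HasCompactSupport u) (s : Set ℝ) :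
    ∫ p in univ ×ˢ s, partialX u p = 0 := by
  have hint : Integrable (partialX u) (volume.prod (volume.restrict s)) := by
    rw [← volume_restrict_univ_prod]
    exact ((continuous_partialX hu).integrable_of_hasCompactSupport
      (hasCompactSupport_partialX hs)).restrict
  rw [volume_restrict_univ_prod, integral_prod_symm _ hint]
  refine integral_eq_zero_of_ae (Filter.Eventually.of_forall fun z => ?_)
  exact integral_eq_zero_of_hasDerivAt_of_integrable
    (fun x => hasDerivAt_partialX (hu.differentiable one_ne_zero _))
    (integrable_comp_prodMk_left (continuous_partialX hu) (hasCompactSupport_partialX hs) z)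
    (integrable_comp_prodMk_left hu.continuous hs z)

theorem integral_univ_prod_Icc_partialZ (hu : ContDiff ℝ 1 u) (hs : HasCompactSupport u)
    {a b : ℝ} (hab : a ≤ b) :
    ∫ p in univ ×ˢ Icc a b, partialZ u p = ∫ x, (u (x, b) - u (x, a)) := by
  have hint : Integrable (partialZ u) (volume.prod (volume.restrict (Icc a b))) := by
    rw [← volume_restrict_univ_prod]
    exact ((continuous_partialZ hu).integrable_of_hasCompactSupport
      (hasCompactSupport_partialZ hs)).restrict
  rw [volume_restrict_univ_prod, integral_prod _ hint]
  refine integral_congr_ae (Filter.Eventually.of_forall fun x => ?_)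
  dsimp only
  rw [integral_Icc_eq_integral_Ioc, ← intervalIntegral.integral_of_le hab]
  exact intervalIntegral.integral_eq_sub_of_hasDerivAt
    (fun z _ => hasDerivAt_partialZ (hu.differentiable one_ne_zero _))
    (((continuous_partialZ hu).comp (by fun_prop)).intervalIntegrable _ _)

theorem integral_univ_prod_Icc_jacobian {φ ζ : ℝ × ℝ → ℝ} (hφ : ContDiff ℝ 2 φ)
    (hζ : ContDiff ℝ 1 ζ) (hζs : HasCompactSupport ζ) {a b : ℝ} (hab : a ≤ b) :
    ∫ p in univ ×ˢ Icc a b, (partialX ζ p * partialZ φ p - partialX φ p * partialZ ζ p) =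
      ∫ x, (ζ (x, a) * partialX φ (x, a) - ζ (x, b) * partialX φ (x, b)) := by
  have hφ1 : ContDiff ℝ (1 + 1) φ := hφ
  have hH : ContDiff ℝ 1 (ζ * partialZ φ) := hζ.mul (contDiff_partialZ hφ1)
  have hG : ContDiff ℝ 1 (ζ * partialX φ) := hζ.mul (contDiff_partialX hφ1)
  have hHs : HasCompactSupport (ζ * partialZ φ) := hζs.mul_right
  have hGs : HasCompactSupport (ζ * partialX φ) := hζs.mul_right
  have hHint : Integrable (partialX (ζ * partialZ φ)) :=
    (continuous_partialX hH).integrable_of_hasCompactSupport (hasCompactSupport_partialX hHs)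
  have hGint : Integrable (partialZ (ζ * partialX φ)) :=
    (continuous_partialZ hG).integrable_of_hasCompactSupport (hasCompactSupport_partialZ hGs)
  simp_rw [jacobian_eq_partialX_sub_partialZ hφ (hζ.differentiable one_ne_zero)]
  rw [integral_sub hHint.restrict hGint.restrict, integral_univ_prod_partialX hH hHs,
    integral_univ_prod_Icc_partialZ hG hGs hab, zero_sub, ← integral_neg]
  simp only [Pi.mul_apply, neg_sub]

end Strip

theorem Complex.sq_norm_add_I_mul (u v : ℂ) :
    ‖u + I * v‖ ^ 2 = ‖u‖ ^ 2 + ‖v‖ ^ 2 + 2 * (u.im * v.re - u.re * v.im) := by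
  simp only [Complex.sq_norm, normSq_apply, add_re, add_im, mul_re, mul_im, I_re, I_im]
  ring

theorem sq_norm_dbar (f : ℝ × ℝ → ℂ) (p : ℝ × ℝ) :
    ‖dbar f p‖ ^ 2 = 1 / 4 * (‖Dx f p‖ ^ 2 + ‖Dz f p‖ ^ 2) +
      1 / 2 * ((Dx f p).im * (Dz f p).re - (Dx f p).re * (Dz f p).im) := by
  have half : ‖(1 / 2 : ℂ)‖ ^ 2 = 1 / 4 := by norm_num
  rw [dbar, norm_mul, mul_pow, Complex.sq_norm_add_I_mul, half]
  ring

section RealImagParts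

variable {φ ζ : ℝ × ℝ → ℝ} {p : ℝ × ℝ}

theorem fderiv_ofReal_add_ofReal_mul_I_apply (hφ : DifferentiableAt ℝ φ p)
    (hζ : DifferentiableAt ℝ ζ p) (w : ℝ × ℝ) :
    fderiv ℝ (fun q => (φ q : ℂ) + ζ q * I) p w = fderiv ℝ φ p w + fderiv ℝ ζ p w * I := by
  have hη : (fun q => (φ q : ℂ) + ζ q * I) = fun q => φ q • (1 : ℂ) + ζ q • I := by
    simp [real_smul]
  rw [hη, fderiv_fun_add (hφ.smul_const _) (hζ.smul_const _), fderiv_smul_const hφ,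
    fderiv_smul_const hζ]
  simp [real_smul]

theorem Dx_ofReal_add_ofReal_mul_I (hφ : DifferentiableAt ℝ φ p) (hζ : DifferentiableAt ℝ ζ p) :
    Dx (fun q => (φ q : ℂ) + ζ q * I) p = partialX φ p + partialX ζ p * I :=
  fderiv_ofReal_add_ofReal_mul_I_apply hφ hζ _

theorem Dz_ofReal_add_ofReal_mul_I (hφ : DifferentiableAt ℝ φ p) (hζ : DifferentiableAt ℝ ζ p) :
    Dz (fun q => (φ q : ℂ) + ζ q * I) p = partialZ φ p + partialZ ζ p * I :=
  fderiv_ofReal_add_ofReal_mul_I_apply hφ hζ _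

end RealImagParts

theorem integral_univ_prod_Icc_sq_norm_dbar {φ ζ : ℝ × ℝ → ℝ} (hφ : ContDiff ℝ 2 φ)
    (hζ : ContDiff ℝ 1 ζ) (hφs : HasCompactSupport φ) (hζs : HasCompactSupport ζ)
    {a b : ℝ} (hab : a ≤ b) :
    ∫ p in univ ×ˢ Icc a b, ‖dbar (fun q => (φ q : ℂ) + ζ q * I) p‖ ^ 2 =
      1 / 4 * (∫ p in univ ×ˢ Icc a b,
        ‖Dx (fun q => (φ q : ℂ) + ζ q * I) p‖ ^ 2 + ‖Dz (fun q => (φ q : ℂ) + ζ q * I) p‖ ^ 2) +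
      1 / 2 * ∫ x, (ζ (x, a) * partialX φ (x, a) - ζ (x, b) * partialX φ (x, b)) := by
  set η : ℝ × ℝ → ℂ := fun q => (φ q : ℂ) + ζ q * I
  have hφ1 : ContDiff ℝ 1 φ := hφ.of_le one_le_two
  have hη : ContDiff ℝ 1 η :=
    (ofRealCLM.contDiff.comp hφ1).add ((ofRealCLM.contDiff.comp hζ).mul contDiff_const)
  have hηs : HasCompactSupport η :=
    (hφs.comp_left ofReal_zero).add (hζs.comp_left ofReal_zero).mul_right
  have hDx : Continuous (Dx η) := (hη.continuous_fderiv one_ne_zero).clm_apply continuous_const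
  have hDz : Continuous (Dz η) := (hη.continuous_fderiv one_ne_zero).clm_apply continuous_const
  have hint_energy : Integrable (fun p => ‖Dx η p‖ ^ 2 + ‖Dz η p‖ ^ 2) :=
    (by fun_prop : Continuous _).integrable_of_hasCompactSupport
      (((hηs.fderiv_apply ℝ (1, 0)).comp_left (g := fun w : ℂ => ‖w‖ ^ 2) (by simp)).add
        ((hηs.fderiv_apply ℝ (0, 1)).comp_left (g := fun w : ℂ => ‖w‖ ^ 2) (by simp)))
  have hint_jacobian :
      Integrable (fun p => partialX ζ p * partialZ φ p - partialX φ p * partialZ ζ p) := by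
    have := continuous_partialX hζ
    have := continuous_partialZ hζ
    have := continuous_partialX hφ1
    have := continuous_partialZ hφ1
    exact (by fun_prop : Continuous _).integrable_of_hasCompactSupport
      ((hasCompactSupport_partialX hζs).mul_right.sub (hasCompactSupport_partialZ hζs).mul_left)
  have hpointwise : ∀ p, ‖dbar η p‖ ^ 2 = 1 / 4 * (‖Dx η p‖ ^ 2 + ‖Dz η p‖ ^ 2) +
      1 / 2 * (partialX ζ p * partialZ φ p - partialX φ p * partialZ ζ p) := by
    intro p
    have hφp := hφ1.differentiable one_ne_zero p
    have hζp := hζ.differentiable one_ne_zero p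
    rw [sq_norm_dbar, Dx_ofReal_add_ofReal_mul_I hφp hζp, Dz_ofReal_add_ofReal_mul_I hφp hζp]
    simp
  simp_rw [hpointwise]
  rw [integral_add (hint_energy.const_mul _).restrict (hint_jacobian.const_mul _).restrict,
    integral_const_mul, integral_const_mul, integral_univ_prod_Icc_jacobian hφ hζ hζs hab]

theorem energy_identity_general
    (z₀ z₁ z₂ τ : ℝ) (h01 : z₀ < z₁) (h12 : z₁ < z₂)
    (φp ζp φm ζm : ℝ × ℝ → ℝ)
    (hφp : ContDiff ℝ (⊤ : ℕ∞) φp) (hζp : ContDiff ℝ (⊤ : ℕ∞) ζp)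
    (hφm : ContDiff ℝ (⊤ : ℕ∞) φm) (hζm : ContDiff ℝ (⊤ : ℕ∞) ζm)
    (hφps : HasCompactSupport φp) (hζps : HasCompactSupport ζp)
    (hφms : HasCompactSupport φm) (hζms : HasCompactSupport ζm)
    (hmatch : ∀ x : ℝ, ζp (x, z₁) = τ * ζm (x, z₁) ∧ τ * φp (x, z₁) = φm (x, z₁))
    (htop : ∀ x : ℝ, φp (x, z₂) = 0) (hbot : ∀ x : ℝ, φm (x, z₀) = 0)
    (ηp ηm : ℝ × ℝ → ℂ)
    (hηp : ∀ p : ℝ × ℝ, ηp p = (φp p : ℂ) + (ζp p : ℂ) * Complex.I)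
    (hηm : ∀ p : ℝ × ℝ, ηm p = (φm p : ℂ) + (ζm p : ℂ) * Complex.I) :
    (∫ p in Set.univ ×ˢ Set.Icc z₁ z₂, ‖dbar ηp p‖ ^ 2) +
      (∫ p in Set.univ ×ˢ Set.Icc z₀ z₁, ‖dbar ηm p‖ ^ 2) =
    (1 / 4) * (∫ p in Set.univ ×ˢ Set.Icc z₁ z₂, ‖Dx ηp p‖ ^ 2 + ‖Dz ηp p‖ ^ 2) +
      (1 / 4) * (∫ p in Set.univ ×ˢ Set.Icc z₀ z₁, ‖Dx ηm p‖ ^ 2 + ‖Dz ηm p‖ ^ 2) := by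
  obtain rfl : ηp = _ := funext hηp
  obtain rfl : ηm = _ := funext hηm
  have hsmooth : ∀ {u : ℝ × ℝ → ℝ} {n : ℕ}, ContDiff ℝ (⊤ : ℕ∞) u → ContDiff ℝ n u :=
    fun hu => hu.of_le (by exact_mod_cast le_top)
  rw [integral_univ_prod_Icc_sq_norm_dbar (hsmooth hφp) (hsmooth hζp) hφps hζps h12.le,
    integral_univ_prod_Icc_sq_norm_dbar (hsmooth hφm) (hsmooth hζm) hφms hζms h01.le]
  have hdφp := hφp.differentiable (by simp)
  have hdφm := hφm.differentiable (by simp)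
  have htop' : ∀ x, partialX φp (x, z₂) = 0 := fun x => by
    simp [partialX_eq_deriv (hdφp _), htop]
  have hbot' : ∀ x, partialX φm (x, z₀) = 0 := fun x => by
    simp [partialX_eq_deriv (hdφm _), hbot]
  have hinterface : ∀ x, ζm (x, z₁) * partialX φm (x, z₁) = ζp (x, z₁) * partialX φp (x, z₁) := by
    intro x
    rw [partialX_eq_deriv (hdφm _), partialX_eq_deriv (hdφp _), (hmatch x).1]
    simp only [← (hmatch _).2, deriv_const_mul_field']
    ring
  simp only [htop', hbot', hinterface, mul_zero, sub_zero, zero_sub, integral_neg]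
  ring

/-- The energy identity `‖∂̄η₊‖² + ‖∂̄η₋‖² = ¼‖dη₊‖² + ¼‖dη₋‖²` for pairs of smooth, compactly
supported functions on the strips `ℝ × [z₁, z₂]` and `ℝ × [z₀, z₁]` obeying the coupled
boundary condition at `z = z₁` (and whose `φ`-components vanish on the outer boundaries,
as required of elements in the dense domain of the relevant Hilbert space). -/
theorem energy_identity
    (z₀ z₁ z₂ τ : ℝ) (hz0 : 0 < z₀) (h01 : z₀ < z₁) (h12 : z₁ < z₂)
    (hτ : τ ∈ Set.Icc (0 : ℝ) 1)
    (φp ζp φm ζm : ℝ × ℝ → ℝ)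
    (hφp : ContDiff ℝ (⊤ : ℕ∞) φp) (hζp : ContDiff ℝ (⊤ : ℕ∞) ζp)
    (hφm : ContDiff ℝ (⊤ : ℕ∞) φm) (hζm : ContDiff ℝ (⊤ : ℕ∞) ζm)
    (hφps : HasCompactSupport φp) (hζps : HasCompactSupport ζp)
    (hφms : HasCompactSupport φm) (hζms : HasCompactSupport ζm)
    (hmatch : ∀ x : ℝ, ζp (x, z₁) = τ * ζm (x, z₁) ∧ τ * φp (x, z₁) = φm (x, z₁))
    (htop : ∀ x : ℝ, φp (x, z₂) = 0) (hbot : ∀ x : ℝ, φm (x, z₀) = 0)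
    (ηp ηm : ℝ × ℝ → ℂ)
    (hηp : ∀ p : ℝ × ℝ, ηp p = (φp p : ℂ) + (ζp p : ℂ) * Complex.I)
    (hηm : ∀ p : ℝ × ℝ, ηm p = (φm p : ℂ) + (ζm p : ℂ) * Complex.I) :
    (∫ p in Set.univ ×ˢ Set.Icc z₁ z₂, ‖dbar ηp p‖ ^ 2) +
      (∫ p in Set.univ ×ˢ Set.Icc z₀ z₁, ‖dbar ηm p‖ ^ 2) =
    (1 / 4) * (∫ p in Set.univ ×ˢ Set.Icc z₁ z₂, ‖Dx ηp p‖ ^ 2 + ‖Dz ηp p‖ ^ 2) +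
      (1 / 4) * (∫ p in Set.univ ×ˢ Set.Icc z₀ z₁, ‖Dx ηm p‖ ^ 2 + ‖Dz ηm p‖ ^ 2) :=
  energy_identity_general z₀ z₁ z₂ τ h01 h12 φp ζp φm ζm hφp hζp hφm hζm hφps hζps hφms hζms hmatch
    htop hbot ηp ηm hηp hηm
end

section
/- If Q(φ, ζ) = 0 for a pair in the admissible domain, then φ ≡ 0 and ζ ≡ 0. Consequently there is a constant c > 0 with Q(φ, ζ) ≥ c ∫_I (φ² + ζ²) for all admissible pairs. -/
/-!
Write `f = ζ′` and `g = φ′ + b ζ`. Compactness gives `Q(φ, ζ) ≥ m (∫ f² + ∫ g²)` with `m > 0`.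
Both functions are controlled pointwise by `P = ∫ |f| + ∫ |g|`: `ζ` oscillates by at most `∫ |f|`,
and its level is fixed by `ζ(u₀) ∫ b = ∫ g - ∫ b (ζ - ζ(u₀))`, which holds because `∫ φ′ = 0`;
then `φ(u) = ∫_{u₀}^u (g - b ζ)`. Cauchy–Schwarz bounds `P²` by `∫ f² + ∫ g²`, so
`φ(u)² + ζ(u)² ≤ C Q(φ, ζ)` on `I`, which gives both the vanishing and the coercivity.
-/

open MeasureTheory Set intervalIntegral

section IntervalIntegral

variable {a b : ℝ} {f : ℝ → ℝ}

lemma abs_integral_le_integral_abs_of_mem_Icc (hf : IntervalIntegrable f volume a b) {u : ℝ}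
    (hu : u ∈ Icc a b) : |∫ x in a..u, f x| ≤ ∫ x in a..b, |f x| :=
  (abs_integral_le_integral_abs hu.1).trans <|
    integral_mono_interval le_rfl hu.1 hu.2 (ae_of_all _ fun _ => abs_nonneg _) hf.abs

lemma sq_integral_abs_le (hab : a ≤ b) (hf : IntervalIntegrable f volume a b)
    (hf2 : IntervalIntegrable (fun x => f x ^ 2) volume a b) :
    (∫ x in a..b, |f x|) ^ 2 ≤ (b - a) * ∫ x in a..b, f x ^ 2 := by
  set S := ∫ x in a..b, |f x|
  set L := b - a
  -- integrate the AM-GM inequality `2 S L |f| ≤ S² + L² f²`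
  have hamgm : ∫ x in a..b, 2 * S * L * |f x| ≤ ∫ x in a..b, (S ^ 2 + L ^ 2 * f x ^ 2) :=
    integral_mono_on hab (hf.abs.const_mul _) (intervalIntegrable_const.add (hf2.const_mul _))
      fun x _ => by nlinarith [sq_nonneg (S - L * |f x|), sq_abs (f x)]
  rw [intervalIntegral.integral_const_mul, integral_add intervalIntegrable_const (hf2.const_mul _),
    intervalIntegral.integral_const, intervalIntegral.integral_const_mul, smul_eq_mul] at hamgm
  rcases hab.eq_or_lt with rfl | hlt
  · simp [S]
  · have hL : 0 < L := sub_pos.2 hlt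
    nlinarith

lemma abs_sub_le_integral_abs_deriv (hf : ContDiff ℝ 1 f) {u : ℝ} (hu : u ∈ Icc a b) :
    |f u - f a| ≤ ∫ x in a..b, |deriv f x| := by
  have hf' := hf.continuous_deriv le_rfl
  rw [← integral_deriv_eq_sub (fun x _ => (hf.differentiable one_ne_zero).differentiableAt)
    (hf'.intervalIntegrable _ _)]
  exact abs_integral_le_integral_abs_of_mem_Icc (hf'.intervalIntegrable _ _) hu

end IntervalIntegral

lemma IsCompact.exists_pos_le_inv {X : Type*} [TopologicalSpace X] {s : Set X} (hs : IsCompact s)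
    {g : X → ℝ} (hg : ContinuousOn g s) (hpos : ∀ x ∈ s, 0 < g x) :
    ∃ m > 0, ∀ x ∈ s, m ≤ (g x)⁻¹ := by
  obtain ⟨C, hC⟩ := hs.exists_bound_of_continuousOn hg
  exact ⟨(max C 1)⁻¹, by positivity, fun x hx => inv_anti₀ (hpos x hx) <|
    (le_abs_self _).trans ((hC x hx).trans (le_max_left _ _))⟩

section AdmissiblePair

variable {u₀ u₁ B : ℝ} {b φ ζ : ℝ → ℝ}

lemma abs_apply_left_mul_abs_integral_le (hu : u₀ ≤ u₁) (hbc : ContinuousOn b (Icc u₀ u₁))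
    (hB : ∀ u ∈ Icc u₀ u₁, |b u| ≤ B) (hφ : ContDiff ℝ 1 φ) (hζ : ContDiff ℝ 1 ζ)
    (hφ₀ : φ u₀ = 0) (hφ₁ : φ u₁ = 0) :
    |ζ u₀| * |∫ u in u₀..u₁, b u| ≤
      (∫ u in u₀..u₁, |deriv φ u + b u * ζ u|) + B * (∫ u in u₀..u₁, |deriv ζ u|) * (u₁ - u₀) := by
  have hφ'I := (hφ.continuous_deriv le_rfl).intervalIntegrable (μ := volume) u₀ u₁
  have hbζI : IntervalIntegrable (fun u => b u * ζ u) volume u₀ u₁ :=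
    (hbc.mul hζ.continuous.continuousOn).intervalIntegrable_of_Icc hu
  have hbζ'I : IntervalIntegrable (fun u => b u * (ζ u - ζ u₀)) volume u₀ u₁ :=
    (hbc.mul (hζ.continuous.continuousOn.sub continuousOn_const)).intervalIntegrable_of_Icc hu
  have hsplit : ζ u₀ * ∫ u in u₀..u₁, b u =
      (∫ u in u₀..u₁, deriv φ u + b u * ζ u) - ∫ u in u₀..u₁, b u * (ζ u - ζ u₀) := by
    rw [integral_add hφ'I hbζI, integral_deriv_eq_sub
      (fun x _ => (hφ.differentiable one_ne_zero).differentiableAt) hφ'I, hφ₀, hφ₁,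
      zero_sub_zero, zero_add, ← integral_sub hbζI hbζ'I, ← intervalIntegral.integral_const_mul]
    exact integral_congr fun u _ => by ring
  have hosc : |∫ u in u₀..u₁, b u * (ζ u - ζ u₀)| ≤
      B * (∫ u in u₀..u₁, |deriv ζ u|) * (u₁ - u₀) := by
    have h := norm_integral_le_of_norm_le_const (a := u₀) (b := u₁)
      (f := fun u => b u * (ζ u - ζ u₀)) (C := B * ∫ u in u₀..u₁, |deriv ζ u|) fun x hx => by
        have hx' : x ∈ Icc u₀ u₁ := Ioc_subset_Icc_self (uIoc_of_le hu ▸ hx)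
        rw [Real.norm_eq_abs, abs_mul]
        exact mul_le_mul (hB x hx') (abs_sub_le_integral_abs_deriv hζ hx') (abs_nonneg _)
          ((abs_nonneg _).trans (hB x hx'))
    rwa [Real.norm_eq_abs, abs_of_nonneg (sub_nonneg.2 hu)] at h
  calc |ζ u₀| * |∫ u in u₀..u₁, b u|
      = |(∫ u in u₀..u₁, deriv φ u + b u * ζ u) - ∫ u in u₀..u₁, b u * (ζ u - ζ u₀)| := by
        rw [← abs_mul, hsplit]
    _ ≤ _ := (abs_sub _ _).trans (add_le_add (abs_integral_le_integral_abs hu) hosc)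

lemma abs_le_integral_abs_add_of_abs_le {M : ℝ} (hu : u₀ ≤ u₁) (hbc : ContinuousOn b (Icc u₀ u₁))
    (hB : ∀ u ∈ Icc u₀ u₁, |b u| ≤ B) (hφ : ContDiff ℝ 1 φ) (hζ : Continuous ζ) (hφ₀ : φ u₀ = 0)
    (hM : ∀ u ∈ Icc u₀ u₁, |ζ u| ≤ M) {u : ℝ} (hu' : u ∈ Icc u₀ u₁) :
    |φ u| ≤ (∫ x in u₀..u₁, |deriv φ x + b x * ζ x|) + B * M * (u₁ - u₀) := by
  have hsub : Icc u₀ u ⊆ Icc u₀ u₁ := Icc_subset_Icc le_rfl hu'.2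
  have hφ' := hφ.continuous_deriv le_rfl
  have hbζI : IntervalIntegrable (fun x => b x * ζ x) volume u₀ u :=
    ((hbc.mono hsub).mul hζ.continuousOn).intervalIntegrable_of_Icc hu'.1
  have hgI : IntervalIntegrable (fun x => deriv φ x + b x * ζ x) volume u₀ u₁ :=
    (hφ'.continuousOn.add (hbc.mul hζ.continuousOn)).intervalIntegrable_of_Icc hu
  have hφu : φ u = (∫ x in u₀..u, deriv φ x + b x * ζ x) - ∫ x in u₀..u, b x * ζ x := by
    rw [integral_add (hφ'.intervalIntegrable _ _) hbζI, integral_deriv_eq_sub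
      (fun x _ => (hφ.differentiable one_ne_zero).differentiableAt) (hφ'.intervalIntegrable _ _),
      hφ₀]
    ring
  have hbζ : |∫ x in u₀..u, b x * ζ x| ≤ B * M * (u - u₀) := by
    have h := norm_integral_le_of_norm_le_const (a := u₀) (b := u) (f := fun x => b x * ζ x)
      (C := B * M) fun x hx => by
        have hx' : x ∈ Icc u₀ u₁ := hsub (Ioc_subset_Icc_self (uIoc_of_le hu'.1 ▸ hx))
        rw [Real.norm_eq_abs, abs_mul]
        exact mul_le_mul (hB x hx') (hM x hx') (abs_nonneg _) ((abs_nonneg _).trans (hB x hx'))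
    rwa [Real.norm_eq_abs, abs_of_nonneg (sub_nonneg.2 hu'.1)] at h
  have hBM : 0 ≤ B * M := mul_nonneg ((abs_nonneg _).trans (hB u hu')) ((abs_nonneg _).trans (hM u hu'))
  calc |φ u| ≤ |∫ x in u₀..u, deriv φ x + b x * ζ x| + |∫ x in u₀..u, b x * ζ x| :=
        hφu ▸ abs_sub _ _
    _ ≤ (∫ x in u₀..u₁, |deriv φ x + b x * ζ x|) + B * M * (u - u₀) :=
        add_le_add (abs_integral_le_integral_abs_of_mem_Icc hgI hu') hbζ
    _ ≤ _ := by gcongr; exact hu'.2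

lemma exists_abs_le_mul_integral_abs (hu : u₀ ≤ u₁) (hbc : ContinuousOn b (Icc u₀ u₁))
    (hb : (∫ u in u₀..u₁, b u) ≠ 0) :
    ∃ K > 0, ∀ φ ζ : ℝ → ℝ, ContDiff ℝ 1 φ → ContDiff ℝ 1 ζ → φ u₀ = 0 → φ u₁ = 0 →
      ∀ u ∈ Icc u₀ u₁,
        |φ u| ≤ K * ((∫ x in u₀..u₁, |deriv ζ x|) + ∫ x in u₀..u₁, |deriv φ x + b x * ζ x|) ∧
        |ζ u| ≤ K * ((∫ x in u₀..u₁, |deriv ζ x|) + ∫ x in u₀..u₁, |deriv φ x + b x * ζ x|) := by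
  obtain ⟨B, hB⟩ := isCompact_Icc.exists_bound_of_continuousOn hbc
  simp only [Real.norm_eq_abs] at hB
  have hBL : 0 ≤ B * (u₁ - u₀) :=
    mul_nonneg ((abs_nonneg _).trans (hB u₀ (left_mem_Icc.2 hu))) (sub_nonneg.2 hu)
  have hβ : 0 < |∫ u in u₀..u₁, b u| := abs_pos.2 hb
  set D := (1 + B * (u₁ - u₀)) / |∫ u in u₀..u₁, b u| + 1
  have hD : 1 ≤ D := le_add_of_nonneg_left (div_nonneg (by linarith) hβ.le)
  refine ⟨(1 + B * (u₁ - u₀)) * D, by positivity, fun φ ζ hφ hζ hφ₀ hφ₁ => ?_⟩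
  set F := ∫ x in u₀..u₁, |deriv ζ x|
  set G := ∫ x in u₀..u₁, |deriv φ x + b x * ζ x|
  have hF : 0 ≤ F := integral_nonneg hu fun _ _ => abs_nonneg _
  have hG : 0 ≤ G := integral_nonneg hu fun _ _ => abs_nonneg _
  have hζ₀ : |ζ u₀| ≤ (1 + B * (u₁ - u₀)) * (F + G) / |∫ u in u₀..u₁, b u| := by
    rw [le_div_iff₀ hβ]
    refine (abs_apply_left_mul_abs_integral_le hu hbc hB hφ hζ hφ₀ hφ₁).trans ?_
    nlinarith [mul_nonneg hBL hG]
  have hζb : ∀ u ∈ Icc u₀ u₁, |ζ u| ≤ D * (F + G) := fun u hu' => by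
    have h := abs_sub_le_integral_abs_deriv hζ hu'
    have hD' : D * (F + G) = (1 + B * (u₁ - u₀)) * (F + G) / |∫ u in u₀..u₁, b u| + (F + G) := by
      ring
    linarith [abs_sub_abs_le_abs_sub (ζ u) (ζ u₀)]
  intro u hu'
  constructor
  · refine (abs_le_integral_abs_add_of_abs_le hu hbc hB hφ hζ.continuous hφ₀ hζb hu').trans ?_
    nlinarith [mul_nonneg hBL (mul_nonneg (by linarith : (0:ℝ) ≤ D) (add_nonneg hF hG))]
  · refine (hζb u hu').trans ?_
    nlinarith [mul_nonneg hBL (mul_nonneg (by linarith : (0:ℝ) ≤ D) (add_nonneg hF hG))]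

end AdmissiblePair

noncomputable def quadForm (a₁ a₂ b : ℝ → ℝ) (u₀ u₁ : ℝ) (φ ζ : ℝ → ℝ) : ℝ :=
  ∫ u in u₀..u₁, ((a₁ u)⁻¹ * (deriv ζ u) ^ 2 + (a₂ u)⁻¹ * (deriv φ u + b u * ζ u) ^ 2)

section QuadForm

variable {u₀ u₁ : ℝ} {a₁ a₂ b φ ζ : ℝ → ℝ}

lemma mul_add_le_quadForm {m : ℝ} (hu : u₀ ≤ u₁)
    (ha₁ : ContinuousOn (fun u => (a₁ u)⁻¹) (Icc u₀ u₁))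
    (ha₂ : ContinuousOn (fun u => (a₂ u)⁻¹) (Icc u₀ u₁)) (hbc : ContinuousOn b (Icc u₀ u₁))
    (hm₁ : ∀ u ∈ Icc u₀ u₁, m ≤ (a₁ u)⁻¹) (hm₂ : ∀ u ∈ Icc u₀ u₁, m ≤ (a₂ u)⁻¹)
    (hφ : ContDiff ℝ 1 φ) (hζ : ContDiff ℝ 1 ζ) :
    m * ((∫ u in u₀..u₁, deriv ζ u ^ 2) + ∫ u in u₀..u₁, (deriv φ u + b u * ζ u) ^ 2) ≤
      quadForm a₁ a₂ b u₀ u₁ φ ζ := by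
  have hζ' := (hζ.continuous_deriv le_rfl).continuousOn (s := Icc u₀ u₁)
  have hg : ContinuousOn (fun u => deriv φ u + b u * ζ u) (Icc u₀ u₁) :=
    (hφ.continuous_deriv le_rfl).continuousOn.add (hbc.mul hζ.continuous.continuousOn)
  have hζ'I : IntervalIntegrable (fun u => deriv ζ u ^ 2) volume u₀ u₁ :=
    (hζ'.pow 2).intervalIntegrable_of_Icc hu
  have hgI : IntervalIntegrable (fun u => (deriv φ u + b u * ζ u) ^ 2) volume u₀ u₁ :=
    (hg.pow 2).intervalIntegrable_of_Icc hu
  rw [mul_add, ← intervalIntegral.integral_const_mul, ← intervalIntegral.integral_const_mul,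
    ← integral_add (hζ'I.const_mul m) (hgI.const_mul m)]
  refine integral_mono_on hu ((hζ'I.const_mul m).add (hgI.const_mul m))
    (((ha₁.mul (hζ'.pow 2)).add (ha₂.mul (hg.pow 2))).intervalIntegrable_of_Icc hu)
    fun u hu' => ?_
  exact add_le_add (mul_le_mul_of_nonneg_right (hm₁ u hu') (sq_nonneg _))
    (mul_le_mul_of_nonneg_right (hm₂ u hu') (sq_nonneg _))

lemma exists_sq_add_sq_le_quadForm (hu : u₀ < u₁)
    (ha₁c : ContinuousOn a₁ (Icc u₀ u₁)) (ha₂c : ContinuousOn a₂ (Icc u₀ u₁))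
    (ha₁ : ∀ u ∈ Icc u₀ u₁, 0 < a₁ u) (ha₂ : ∀ u ∈ Icc u₀ u₁, 0 < a₂ u)
    (hbc : ContinuousOn b (Icc u₀ u₁)) (hb : (∫ u in u₀..u₁, b u) ≠ 0) :
    ∃ C > 0, ∀ φ ζ : ℝ → ℝ, ContDiff ℝ 1 φ → ContDiff ℝ 1 ζ → φ u₀ = 0 → φ u₁ = 0 →
      ∀ u ∈ Icc u₀ u₁, φ u ^ 2 + ζ u ^ 2 ≤ C * quadForm a₁ a₂ b u₀ u₁ φ ζ := by
  obtain ⟨K, hK, hbound⟩ := exists_abs_le_mul_integral_abs hu.le hbc hb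
  obtain ⟨m₁, hm₁, hle₁⟩ := isCompact_Icc.exists_pos_le_inv ha₁c ha₁
  obtain ⟨m₂, hm₂, hle₂⟩ := isCompact_Icc.exists_pos_le_inv ha₂c ha₂
  have hm : 0 < min m₁ m₂ := lt_min hm₁ hm₂
  have hL : 0 < u₁ - u₀ := sub_pos.2 hu
  refine ⟨4 * K ^ 2 * (u₁ - u₀) / min m₁ m₂, by positivity,
    fun φ ζ hφ hζ hφ₀ hφ₁ u hu' => ?_⟩
  obtain ⟨hφu, hζu⟩ := hbound φ ζ hφ hζ hφ₀ hφ₁ u hu'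
  have hQ := mul_add_le_quadForm hu.le (ha₁c.inv₀ fun u hu => (ha₁ u hu).ne')
    (ha₂c.inv₀ fun u hu => (ha₂ u hu).ne') hbc
    (fun u hu => (min_le_left _ _).trans (hle₁ u hu))
    (fun u hu => (min_le_right _ _).trans (hle₂ u hu)) hφ hζ
  have hζ' := hζ.continuous_deriv le_rfl
  have hg : ContinuousOn (fun u => deriv φ u + b u * ζ u) (Icc u₀ u₁) :=
    (hφ.continuous_deriv le_rfl).continuousOn.add (hbc.mul hζ.continuous.continuousOn)
  have hF := sq_integral_abs_le hu.le (hζ'.intervalIntegrable _ _)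
    ((hζ'.pow 2).intervalIntegrable _ _)
  have hG := sq_integral_abs_le hu.le (hg.intervalIntegrable_of_Icc hu.le)
    ((hg.pow 2).intervalIntegrable_of_Icc hu.le)
  set F := ∫ x in u₀..u₁, |deriv ζ x|
  set G := ∫ x in u₀..u₁, |deriv φ x + b x * ζ x|
  set Z := ∫ x in u₀..u₁, deriv ζ x ^ 2
  set W := ∫ x in u₀..u₁, (deriv φ x + b x * ζ x) ^ 2
  calc φ u ^ 2 + ζ u ^ 2 ≤ 2 * K ^ 2 * (F + G) ^ 2 := by
        nlinarith [sq_abs (φ u), sq_abs (ζ u), abs_nonneg (φ u), abs_nonneg (ζ u)]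
    _ ≤ 4 * K ^ 2 * (F ^ 2 + G ^ 2) := by
        nlinarith [mul_nonneg (sq_nonneg K) (sq_nonneg (F - G))]
    _ ≤ 4 * K ^ 2 * ((u₁ - u₀) * (Z + W)) := by gcongr; linarith
    _ = 4 * K ^ 2 * (u₁ - u₀) / min m₁ m₂ * (min m₁ m₂ * (Z + W)) := by field_simp
    _ ≤ _ := by gcongr

end QuadForm

/-- If the quadratic form `Q(φ,ζ) = ∫ a₁⁻¹ (ζ′)² + a₂⁻¹ (φ′ + b ζ)²` vanishes on an admissible
pair (`C¹`, with `φ` vanishing at both endpoints), the pair vanishes; consequently `Q` is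
coercive: `Q(φ,ζ) ≥ c ∫ (φ² + ζ²)` for some `c > 0` and all admissible pairs. -/
theorem quadratic_form_vanishing_and_coercive
    (u₀ u₁ : ℝ) (h01 : u₀ < u₁)
    (a₁ a₂ bf : ℝ → ℝ)
    (ha₁c : ContinuousOn a₁ (Set.Icc u₀ u₁)) (ha₂c : ContinuousOn a₂ (Set.Icc u₀ u₁))
    (ha₁ : ∀ u ∈ Set.Icc u₀ u₁, 0 < a₁ u) (ha₂ : ∀ u ∈ Set.Icc u₀ u₁, 0 < a₂ u)
    (hbc : ContinuousOn bf (Set.Icc u₀ u₁))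
    (hb : (∫ u in u₀..u₁, bf u) ≠ 0) :
    (∀ φ ζ : ℝ → ℝ, ContDiff ℝ 1 φ → ContDiff ℝ 1 ζ →
        φ u₀ = 0 → φ u₁ = 0 →
        (∫ u in u₀..u₁, ((a₁ u)⁻¹ * (deriv ζ u) ^ 2
            + (a₂ u)⁻¹ * (deriv φ u + bf u * ζ u) ^ 2)) = 0 →
        ∀ u ∈ Set.Icc u₀ u₁, φ u = 0 ∧ ζ u = 0) ∧
    ∃ c : ℝ, 0 < c ∧ ∀ φ ζ : ℝ → ℝ, ContDiff ℝ 1 φ → ContDiff ℝ 1 ζ →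
        φ u₀ = 0 → φ u₁ = 0 →
        c * (∫ u in u₀..u₁, ((φ u) ^ 2 + (ζ u) ^ 2)) ≤
          ∫ u in u₀..u₁, ((a₁ u)⁻¹ * (deriv ζ u) ^ 2
            + (a₂ u)⁻¹ * (deriv φ u + bf u * ζ u) ^ 2) := by
  obtain ⟨C, hC, hpt⟩ := exists_sq_add_sq_le_quadForm h01 ha₁c ha₂c ha₁ ha₂ hbc hb
  have hL : 0 < u₁ - u₀ := sub_pos.2 h01
  refine ⟨fun φ ζ hφ hζ hφ₀ hφ₁ hQ u hu => ?_, (C * (u₁ - u₀))⁻¹, by positivity,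
    fun φ ζ hφ hζ hφ₀ hφ₁ => ?_⟩
  · have h := hpt φ ζ hφ hζ hφ₀ hφ₁ u hu
    rw [quadForm, hQ, mul_zero] at h
    simpa only [sq, mul_self_add_mul_self_eq_zero] using le_antisymm h (by positivity)
  · have hint := norm_integral_le_of_norm_le_const (a := u₀) (b := u₁)
      (f := fun u => φ u ^ 2 + ζ u ^ 2) (C := C * quadForm a₁ a₂ bf u₀ u₁ φ ζ) fun x hx => by
        rw [Real.norm_eq_abs, abs_of_nonneg (by positivity)]
        exact hpt φ ζ hφ hζ hφ₀ hφ₁ x (Ioc_subset_Icc_self (uIoc_of_le h01.le ▸ hx))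
    rw [Real.norm_eq_abs, abs_of_pos hL] at hint
    calc (C * (u₁ - u₀))⁻¹ * ∫ u in u₀..u₁, φ u ^ 2 + ζ u ^ 2
        ≤ (C * (u₁ - u₀))⁻¹ * (C * quadForm a₁ a₂ bf u₀ u₁ φ ζ * (u₁ - u₀)) :=
          mul_le_mul_of_nonneg_left ((le_abs_self _).trans hint) (by positivity)
      _ = quadForm a₁ a₂ bf u₀ u₁ φ ζ := by field_simp
end

section
/- Let ζ be a real-valued function on the strip ℝ × [a, b] that is continuous, harmonic in the interior, converges to 0 uniformly as |x| → ∞, satisfies |ζ(x, a)| ≤ c for all x, and satisfies ∂_z ζ(x, b) ≤ R and −∂_z ζ(x, b) ≤ R for all x (i.e. |∂_z ζ| ≤ R on the top boundary). Then |ζ(x, z)| ≤ c + R(z − a) for all (x, z) in the strip. -/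
/-!
Maximum principle with a barrier. For `ε > 0` the function
`g_ε(z) = c + R (z - a) + ε ((z - a) + (b - a)² - (b - z)²)` is nonnegative on `[a, b]`, equals `c`
at `z = a`, has `g_ε'(b) = R + ε > R` and `g_ε'' = -2ε < 0`. Hence `±ζ - g_ε` is strictly
subharmonic, `≤ 0` on the bottom and at infinity, and has negative `z`-derivative on the top. A
positive value would give a maximum on the closed strip (by decay at infinity and compactness),
which can lie neither on the bottom, nor on the top (the one-sided derivative there would be
`≥ 0`), nor in the interior (both second partial derivatives would be `≤ 0`). So `|ζ| ≤ g_ε`, and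
`ε → 0` gives the bound.
-/

open Set Filter Topology

theorem IsLocalMax.deriv_deriv_nonpos {f : ℝ → ℝ} {x : ℝ} (hmax : IsLocalMax f x)
    (hf : ContinuousAt f x) : deriv (deriv f) x ≤ 0 := by
  by_contra! hpos
  -- a positive second derivative would also make `x` a local minimum, so `f` is locally constant
  have hmin := isLocalMin_of_deriv_deriv_pos hpos hmax.deriv_eq_zero hf
  have hconst : f =ᶠ[𝓝 x] fun _ => f x := (hmin.and hmax).mono fun y hy => le_antisymm hy.2 hy.1
  simp [hconst.deriv.deriv_eq] at hpos

theorem IsLocalMaxOn.hasDerivWithinAt_Iic_nonneg {f : ℝ → ℝ} {b d : ℝ}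
    (hmax : IsLocalMaxOn f (Iic b) b) (hf : HasDerivWithinAt f d (Iic b) b) : 0 ≤ d := by
  have hcone : (-1 : ℝ) ∈ posTangentConeAt (Iic b) b :=
    mem_posTangentConeAt_of_segment_subset (by
      rw [segment_symm, segment_eq_Icc (by linarith)]
      exact Icc_subset_Iic_self)
  simpa using hmax.hasFDerivWithinAt_nonpos hf.hasFDerivWithinAt hcone

noncomputable def curriedLaplacian (v : ℝ → ℝ → ℝ) (x z : ℝ) : ℝ :=
  deriv (deriv fun t => v t z) x + deriv (deriv fun t => v x t) z

theorem curriedLaplacian_neg (v : ℝ → ℝ → ℝ) (x z : ℝ) :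
    curriedLaplacian (fun x z => -v x z) x z = -curriedLaplacian v x z := by
  simp only [curriedLaplacian, deriv.fun_neg', deriv.fun_neg]
  ring

theorem curriedLaplacian_nonpos_of_isLocalMax {v : ℝ → ℝ → ℝ} {x z : ℝ}
    (hmax : IsLocalMax (fun p : ℝ × ℝ => v p.1 p.2) (x, z))
    (hv : ContinuousAt (fun p : ℝ × ℝ => v p.1 p.2) (x, z)) :
    curriedLaplacian v x z ≤ 0 := by
  have hx : ContinuousAt (fun t : ℝ => (t, z)) x := by fun_prop
  have hz : ContinuousAt (fun t : ℝ => (x, t)) z := by fun_prop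
  have hxx : deriv (deriv fun t => v t z) x ≤ 0 :=
    (hmax.comp_continuous (g := fun t => (t, z)) hx).deriv_deriv_nonpos (hv.comp_of_eq hx rfl)
  have hzz : deriv (deriv fun t => v x t) z ≤ 0 :=
    (hmax.comp_continuous (g := fun t => (x, t)) hz).deriv_deriv_nonpos (hv.comp_of_eq hz rfl)
  exact add_nonpos hxx hzz

theorem curriedLaplacian_sub_right {v : ℝ → ℝ → ℝ} {g : ℝ → ℝ} {x z : ℝ}
    (hv : ContDiffAt ℝ 2 (v x) z) (hg : ContDiffAt ℝ 2 g z) :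
    curriedLaplacian (fun x z => v x z - g z) x z =
      curriedLaplacian v x z - deriv (deriv g) z := by
  have hx : deriv (fun t => v t z - g z) = deriv fun t => v t z :=
    funext fun t => deriv_sub_const (g z)
  have hz := iteratedDeriv_fun_sub hv hg
  simp only [iteratedDeriv_succ, iteratedDeriv_zero] at hz
  rw [curriedLaplacian, curriedLaplacian, hx, hz, add_sub_assoc]

theorem exists_isMaxOn_univ_prod {S : Set ℝ} (hS : IsCompact S) {u : ℝ × ℝ → ℝ}
    (hu : ContinuousOn u (univ ×ˢ S))
    (hdecay : ∀ ε > 0, ∃ X, ∀ q ∈ univ ×ˢ S, X ≤ |q.1| → u q ≤ ε)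
    {p₀ : ℝ × ℝ} (hp₀ : p₀ ∈ univ ×ˢ S) (hpos : 0 < u p₀) :
    ∃ p ∈ univ ×ˢ S, IsMaxOn u (univ ×ˢ S) p := by
  obtain ⟨X, hX⟩ := hdecay _ (half_pos hpos)
  set Y := max X |p₀.1|
  have hp₀K : p₀ ∈ Icc (-Y) Y ×ˢ S := ⟨abs_le.mp (le_max_right _ _), hp₀.2⟩
  obtain ⟨p, hpK, hpmax⟩ := (isCompact_Icc.prod hS).exists_isMaxOn ⟨p₀, hp₀K⟩
    (hu.mono (prod_mono (subset_univ _) subset_rfl))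
  refine ⟨p, ⟨trivial, hpK.2⟩, fun q hq => ?_⟩
  by_cases hqY : |q.1| ≤ Y
  · exact hpmax ⟨abs_le.mp hqY, hq.2⟩
  · have hq_small := hX q hq ((le_max_left _ _).trans (not_le.mp hqY).le)
    have hp_large : u p₀ ≤ u p := hpmax hp₀K
    show u q ≤ u p
    linarith

theorem nonpos_of_curriedLaplacian_pos {a b : ℝ} {v : ℝ → ℝ → ℝ}
    (hcont : ContinuousOn (fun p : ℝ × ℝ => v p.1 p.2) (univ ×ˢ Icc a b))
    (hlap : ∀ x z, a < z → z < b → 0 < curriedLaplacian v x z)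
    (hdecay : ∀ ε > 0, ∃ X, ∀ x z, X ≤ |x| → z ∈ Icc a b → v x z ≤ ε)
    (hbot : ∀ x, v x a ≤ 0)
    (htop : ∀ x, ∃ d < 0, HasDerivWithinAt (v x) d (Iic b) b) :
    ∀ x, ∀ z ∈ Icc a b, v x z ≤ 0 := by
  intro x₀ z₀ hz₀
  by_contra! hpos
  obtain ⟨⟨x, z⟩, ⟨-, hz⟩, hmax⟩ := exists_isMaxOn_univ_prod isCompact_Icc hcont
    (fun ε hε => (hdecay ε hε).imp fun X hX q hq hqX => hX _ _ hqX hq.2)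
    (p₀ := (x₀, z₀)) ⟨trivial, hz₀⟩ hpos
  have hvpos : 0 < v x z := hpos.trans_le (isMaxOn_iff.mp hmax (x₀, z₀) ⟨trivial, hz₀⟩)
  rcases hz.1.eq_or_lt with rfl | ha
  · exact (hbot x).not_gt hvpos
  rcases hz.2.eq_or_lt with rfl | hb
  · obtain ⟨d, hd, hder⟩ := htop x
    have htopmax : IsLocalMaxOn (v x) (Iic z) z :=
      Filter.mem_of_superset (Icc_mem_nhdsLE ha) fun t ht =>
        isMaxOn_iff.mp hmax (x, t) ⟨trivial, ht⟩
    exact hd.not_ge (htopmax.hasDerivWithinAt_Iic_nonneg hder)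
  · have hstrip : univ ×ˢ Icc a b ∈ 𝓝 (x, z) := prod_mem_nhds univ_mem (Icc_mem_nhds ha hb)
    exact (hlap x z ha hb).not_ge
      (curriedLaplacian_nonpos_of_isLocalMax (hmax.isLocalMax hstrip) (hcont.continuousAt hstrip))

theorem le_of_curriedLaplacian_nonneg {a b : ℝ} {ζ : ℝ → ℝ → ℝ} {g : ℝ → ℝ}
    (hcont : ContinuousOn (fun p : ℝ × ℝ => ζ p.1 p.2) (univ ×ˢ Icc a b))
    (hsmooth : ContDiffOn ℝ 2 (fun p : ℝ × ℝ => ζ p.1 p.2) (univ ×ˢ Ioo a b))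
    (hlap : ∀ x z, a < z → z < b → 0 ≤ curriedLaplacian ζ x z)
    (hg : ContDiff ℝ 2 g) (hg_concave : ∀ z ∈ Ioo a b, deriv (deriv g) z < 0)
    (hdecay : ∀ ε > 0, ∃ X, ∀ x z, X ≤ |x| → z ∈ Icc a b → ζ x z ≤ g z + ε)
    (hbot : ∀ x, ζ x a ≤ g a)
    (htop : ∀ x, ∃ d < deriv g b, HasDerivWithinAt (ζ x) d (Iic b) b) :
    ∀ x, ∀ z ∈ Icc a b, ζ x z ≤ g z := by
  have hdiff := nonpos_of_curriedLaplacian_pos (v := fun x z => ζ x z - g z)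
    (hcont.sub (hg.continuous.comp continuous_snd).continuousOn) ?lap
    (fun ε hε => (hdecay ε hε).imp fun X hX x z hx hz => by linarith [hX x z hx hz])
    (fun x => sub_nonpos.mpr (hbot x)) ?top
  · exact fun x z hz => sub_nonpos.mp (hdiff x z hz)
  case lap =>
    intro x z ha hb
    have hslice : ContDiffAt ℝ 2 (ζ x) z :=
      (hsmooth.contDiffAt (prod_mem_nhds univ_mem (Ioo_mem_nhds ha hb))).comp z
        (contDiffAt_const.prodMk contDiffAt_id)
    rw [curriedLaplacian_sub_right hslice hg.contDiffAt]
    linarith [hlap x z ha hb, hg_concave z ⟨ha, hb⟩]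
  case top =>
    intro x
    obtain ⟨d, hd, hder⟩ := htop x
    exact ⟨d - deriv g b, sub_neg.mpr hd,
      hder.sub ((hg.differentiable two_ne_zero) b).hasDerivAt.hasDerivWithinAt⟩

theorem abs_le_of_curriedLaplacian_eq_zero {a b : ℝ} {ζ : ℝ → ℝ → ℝ} {g : ℝ → ℝ}
    (hcont : ContinuousOn (fun p : ℝ × ℝ => ζ p.1 p.2) (univ ×ˢ Icc a b))
    (hsmooth : ContDiffOn ℝ 2 (fun p : ℝ × ℝ => ζ p.1 p.2) (univ ×ˢ Ioo a b))
    (hharm : ∀ x z, a < z → z < b → curriedLaplacian ζ x z = 0)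
    (hg : ContDiff ℝ 2 g) (hg_concave : ∀ z ∈ Ioo a b, deriv (deriv g) z < 0)
    (hdecay : ∀ ε > 0, ∃ X, ∀ x z, X ≤ |x| → z ∈ Icc a b → |ζ x z| ≤ g z + ε)
    (hbot : ∀ x, |ζ x a| ≤ g a)
    (htop : ∀ x, ∃ d, HasDerivWithinAt (ζ x) d (Iic b) b ∧ |d| < deriv g b) :
    ∀ x, ∀ z ∈ Icc a b, |ζ x z| ≤ g z := by
  have hupper := le_of_curriedLaplacian_nonneg hcont hsmooth
    (fun x z ha hb => (hharm x z ha hb).ge) hg hg_concave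
    (fun ε hε => (hdecay ε hε).imp fun X hX x z hx hz => (le_abs_self _).trans (hX x z hx hz))
    (fun x => (le_abs_self _).trans (hbot x))
    (fun x => (htop x).imp fun d hd => ⟨(le_abs_self d).trans_lt hd.2, hd.1⟩)
  have hlower := le_of_curriedLaplacian_nonneg (ζ := fun x z => -ζ x z) hcont.neg hsmooth.neg
    (fun x z ha hb => by rw [curriedLaplacian_neg, hharm x z ha hb, neg_zero]) hg hg_concave
    (fun ε hε => (hdecay ε hε).imp fun X hX x z hx hz => (neg_le_abs _).trans (hX x z hx hz))
    (fun x => (neg_le_abs _).trans (hbot x))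
    (fun x => (htop x).elim fun d hd => ⟨-d, (neg_le_abs d).trans_lt hd.2, hd.1.neg⟩)
  exact fun x z hz => abs_le.mpr ⟨neg_le.mp (hlower x z hz), hupper x z hz⟩

noncomputable def stripBarrier (a b c R ε z : ℝ) : ℝ :=
  c + R * (z - a) + ε * (z - a + (b - a) ^ 2 - (b - z) ^ 2)

section stripBarrier

variable (a b c R ε : ℝ)

theorem contDiff_stripBarrier : ContDiff ℝ 2 (stripBarrier a b c R ε) := by
  unfold stripBarrier
  fun_prop

theorem hasDerivAt_stripBarrier (z : ℝ) :
    HasDerivAt (stripBarrier a b c R ε) (R + ε * (1 + 2 * (b - z))) z := by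
  have hlin : HasDerivAt (fun z => z - a) 1 z := (hasDerivAt_id' z).sub_const a
  have hsq : HasDerivAt (fun z => (b - z) ^ 2) (2 * (b - z) * -1) z := by
    simpa using ((hasDerivAt_id' z).const_sub b).fun_pow 2
  exact (((hlin.const_mul R).const_add c).add
    (((hlin.add_const ((b - a) ^ 2)).sub hsq).const_mul ε)).congr_deriv (by ring)

theorem deriv_stripBarrier : deriv (stripBarrier a b c R ε) = fun z => R + ε * (1 + 2 * (b - z)) :=
  funext fun z => (hasDerivAt_stripBarrier a b c R ε z).deriv

theorem deriv_deriv_stripBarrier (z : ℝ) : deriv (deriv (stripBarrier a b c R ε)) z = -2 * ε := by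
  rw [deriv_stripBarrier]
  simp [mul_comm]

theorem stripBarrier_left : stripBarrier a b c R ε a = c := by
  simp [stripBarrier]

variable {a b c R ε}

theorem stripBarrier_nonneg (hc : 0 ≤ c) (hR : 0 ≤ R) (hε : 0 ≤ ε) {z : ℝ} (hz : z ∈ Icc a b) :
    0 ≤ stripBarrier a b c R ε z := by
  obtain ⟨haz, hzb⟩ := hz
  have hsq : (b - z) ^ 2 ≤ (b - a) ^ 2 := pow_le_pow_left₀ (by linarith) (by linarith) 2
  unfold stripBarrier
  have hlin := mul_nonneg hR (sub_nonneg.mpr haz)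
  have hbump := mul_nonneg hε (by linarith : 0 ≤ z - a + (b - a) ^ 2 - (b - z) ^ 2)
  linarith

theorem tendsto_stripBarrier_zero (z : ℝ) :
    Tendsto (fun ε => stripBarrier a b c R ε z) (𝓝[>] 0) (𝓝 (c + R * (z - a))) := by
  have hcont : Continuous fun ε => stripBarrier a b c R ε z := by
    unfold stripBarrier
    fun_prop
  exact (hcont.tendsto' 0 _ (by simp [stripBarrier])).mono_left nhdsWithin_le_nhds

end stripBarrier

theorem strip_comparison_bound_general (a b c R : ℝ) (hc : 0 ≤ c) (hR : 0 ≤ R)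
    (ζ : ℝ → ℝ → ℝ)
    (hcont : ContinuousOn (fun p : ℝ × ℝ => ζ p.1 p.2) (Set.univ ×ˢ Set.Icc a b))
    (hsmooth : ContDiffOn ℝ 2 (fun p : ℝ × ℝ => ζ p.1 p.2) (Set.univ ×ˢ Set.Ioo a b))
    (hharm : ∀ x z : ℝ, a < z → z < b →
      deriv (deriv (fun t => ζ t z)) x + deriv (deriv (fun t => ζ x t)) z = 0)
    (hdecay : ∀ ε > (0 : ℝ), ∃ X : ℝ, ∀ x z : ℝ, X ≤ |x| → z ∈ Set.Icc a b → |ζ x z| ≤ ε)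
    (hbot : ∀ x : ℝ, |ζ x a| ≤ c)
    (htop : ∀ x : ℝ, ∃ d : ℝ,
      HasDerivWithinAt (fun z => ζ x z) d (Set.Iic b) b ∧ |d| ≤ R) :
    ∀ x : ℝ, ∀ z ∈ Set.Icc a b, |ζ x z| ≤ c + R * (z - a) := by
  intro x z hz
  have hbound : ∀ ε > 0, |ζ x z| ≤ stripBarrier a b c R ε z := fun ε hε =>
    abs_le_of_curriedLaplacian_eq_zero hcont hsmooth hharm (contDiff_stripBarrier a b c R ε)
      (fun z _ => by rw [deriv_deriv_stripBarrier]; linarith)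
      (fun η hη => (hdecay η hη).imp fun X hX x z hx hz =>
        (hX x z hx hz).trans (le_add_of_nonneg_left (stripBarrier_nonneg hc hR hε.le hz)))
      (fun x => by rw [stripBarrier_left]; exact hbot x)
      (fun x => (htop x).imp fun d hd => ⟨hd.1, by rw [deriv_stripBarrier]; linarith [hd.2]⟩)
      x z hz
  exact ge_of_tendsto (tendsto_stripBarrier_zero z) (eventually_nhdsWithin_of_forall hbound)

/-- A continuous function on the strip `ℝ × [a, b]` that is harmonic in the interior, decays
to `0` uniformly as `|x| → ∞`, is bounded by `c` in absolute value on the bottom boundary,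
and whose `z`-derivative on the top boundary is bounded by `R` in absolute value, satisfies
`|ζ(x,z)| ≤ c + R (z − a)` throughout the strip. -/
theorem strip_comparison_bound (a b c R : ℝ) (hab : a < b) (hc : 0 ≤ c) (hR : 0 ≤ R)
    (ζ : ℝ → ℝ → ℝ)
    (hcont : ContinuousOn (fun p : ℝ × ℝ => ζ p.1 p.2) (Set.univ ×ˢ Set.Icc a b))
    (hsmooth : ContDiffOn ℝ 2 (fun p : ℝ × ℝ => ζ p.1 p.2) (Set.univ ×ˢ Set.Ioo a b))
    (hharm : ∀ x z : ℝ, a < z → z < b →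
      deriv (deriv (fun t => ζ t z)) x + deriv (deriv (fun t => ζ x t)) z = 0)
    (hdecay : ∀ ε > (0 : ℝ), ∃ X : ℝ, ∀ x z : ℝ, X ≤ |x| → z ∈ Set.Icc a b → |ζ x z| ≤ ε)
    (hbot : ∀ x : ℝ, |ζ x a| ≤ c)
    (htop : ∀ x : ℝ, ∃ d : ℝ,
      HasDerivWithinAt (fun z => ζ x z) d (Set.Iic b) b ∧ |d| ≤ R) :
    ∀ x : ℝ, ∀ z ∈ Set.Icc a b, |ζ x z| ≤ c + R * (z - a) :=
  strip_comparison_bound_general a b c R hc hR ζ hcont hsmooth hharm hdecay hbot htop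
end
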